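/- arXiv:2108.00287 — 4 statements merged into one kernel-verified Lean document; each statement's English description precedes it below -/
import Mathlib

section
/- Let k be a positive integer and let θ ∈ ℂ be either transcendental over ℚ, or algebraic over ℚ of degree d ≥ k. If x₁,…,x_k, y₁,…,y_k are integers satisfying (x₁+θ)⋯(x_k+θ) = (y₁+θ)⋯(y_k+θ), then (y₁,…,y_k) is a permutation of (x₁,…,x_k), i.e., there exists a permutation σ of {1,…,k} with y_i = x_{σ(i)} for all i. -/
/-!
Put `p = ∏ (X + xᵢ)` and `q = ∏ (X + yᵢ)` in `ℚ[X]`. Both are monic of degree `k`, so `p - q`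
has degree `< k`; it vanishes at `θ`, and as `θ` is transcendental or has minimal polynomial of
degree `≥ k`, it must be zero. Hence `p = q`, and comparing roots gives `{-xᵢ} = {-yᵢ}` as multisets.
-/

open Polynomial

theorem exists_perm_of_multiset_map_eq {n : ℕ} {α : Type*} [LinearOrder α] {x y : Fin n → α}
    (h : Multiset.map x Finset.univ.val = Multiset.map y Finset.univ.val) :
    ∃ σ : Equiv.Perm (Fin n), ∀ i, y i = x (σ i) := by
  have hperm : (List.ofFn y).Perm (List.ofFn x) := by
    rw [Fin.univ_val_map, Fin.univ_val_map] at h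
    exact Quotient.exact h.symm
  -- A sorted list is determined by its multiset of entries.
  have hsorted : x ∘ Tuple.sort x = y ∘ Tuple.sort y := by
    apply List.ofFn_injective
    refine List.Perm.eq_of_sortedLE (Tuple.monotone_sort x).sortedLE_ofFn
      (Tuple.monotone_sort y).sortedLE_ofFn ?_
    exact ((Tuple.sort x).ofFn_comp_perm x).trans
      (hperm.symm.trans ((Tuple.sort y).ofFn_comp_perm y).symm)
  refine ⟨(Tuple.sort y).symm.trans (Tuple.sort x), fun i => ?_⟩
  simpa using (congrFun hsorted ((Tuple.sort y).symm i)).symm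

namespace Polynomial

variable {K A : Type*} [Field K]

theorem isMonicOfDegree_multiset_prod_X_sub_C (s : Multiset K) :
    IsMonicOfDegree (s.map fun a => X - C a).prod (Multiset.card s) :=
  ⟨natDegree_multiset_prod_X_sub_C_eq_card s, monic_multisetProd_X_sub_C s⟩

theorem IsMonicOfDegree.eq_of_aeval_eq [Ring A] [Algebra K A] {θ : A} {p q : K[X]} {n : ℕ}
    (hp : IsMonicOfDegree p n) (hq : IsMonicOfDegree q n)
    (hθ : Transcendental K θ ∨ n ≤ (minpoly K θ).natDegree) (h : aeval θ p = aeval θ q) :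
    p = q := by
  obtain rfl | hn := eq_or_ne n 0
  · rw [isMonicOfDegree_zero_iff] at hp hq
    rw [hp, hq]
  by_contra hne
  have hsub : p - q ≠ 0 := sub_ne_zero.mpr hne
  have hroot : aeval θ (p - q) = 0 := by rw [map_sub, h, sub_self]
  have hlt : (p - q).natDegree < n := hp.natDegree_sub_lt hn hq
  rcases hθ with htr | hmin
  · exact htr ⟨p - q, hsub, hroot⟩
  · have := natDegree_le_of_dvd (minpoly.dvd K θ hroot) hsub
    omega

theorem multiset_eq_of_prod_sub_algebraMap_eq [CommRing A] [Algebra K A] {θ : A}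
    {s t : Multiset K} (hcard : Multiset.card s = Multiset.card t)
    (hθ : Transcendental K θ ∨ Multiset.card s ≤ (minpoly K θ).natDegree)
    (h : (s.map fun a => θ - algebraMap K A a).prod = (t.map fun a => θ - algebraMap K A a).prod) :
    s = t := by
  have hpoly : (s.map fun a => X - C a).prod = (t.map fun a => X - C a).prod := by
    refine (isMonicOfDegree_multiset_prod_X_sub_C s).eq_of_aeval_eq
      (hcard ▸ isMonicOfDegree_multiset_prod_X_sub_C t) hθ ?_
    simpa [map_multiset_prod, Multiset.map_map, Function.comp_def] using h
  simpa using congrArg roots hpoly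

end Polynomial

theorem solutions_are_diagonal_large_degree_general (k : ℕ) (θ : ℂ)
    (hθ : Transcendental ℚ θ ∨ (IsAlgebraic ℚ θ ∧ k ≤ (minpoly ℚ θ).natDegree))
    (x y : Fin k → ℤ)
    (h : ∏ i, ((x i : ℂ) + θ) = ∏ i, ((y i : ℂ) + θ)) :
    ∃ σ : Equiv.Perm (Fin k), ∀ i, y i = x (σ i) := by
  let negRoots (z : Fin k → ℤ) : Multiset ℚ := (Finset.univ.val.map z).map fun n : ℤ => -(n : ℚ)
  have hprod (z : Fin k → ℤ) :
      ((negRoots z).map fun a => θ - algebraMap ℚ ℂ a).prod = ∏ i, ((z i : ℂ) + θ) := by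
    simp [negRoots, Finset.prod_eq_multiset_prod, Function.comp_def, add_comm]
  have hroots : negRoots x = negRoots y :=
    multiset_eq_of_prod_sub_algebraMap_eq (by simp [negRoots])
      (hθ.imp_right fun hd => by simpa [negRoots] using hd.2) (by rw [hprod, hprod, h])
  have hneg : Function.Injective fun n : ℤ => -(n : ℚ) := neg_injective.comp Int.cast_injective
  apply exists_perm_of_multiset_map_eq
  exact Multiset.map_injective hneg hroots

/-- If `θ ∈ ℂ` is transcendental over `ℚ`, or algebraic over `ℚ` of degree `d ≥ k`, then any
integral solution of `(x₁+θ)⋯(x_k+θ) = (y₁+θ)⋯(y_k+θ)` is diagonal: `y` is a permutation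
of `x`. -/
theorem solutions_are_diagonal_large_degree (k : ℕ) (hk : 0 < k) (θ : ℂ)
    (hθ : Transcendental ℚ θ ∨ (IsAlgebraic ℚ θ ∧ k ≤ (minpoly ℚ θ).natDegree))
    (x y : Fin k → ℤ)
    (h : ∏ i, ((x i : ℂ) + θ) = ∏ i, ((y i : ℂ) + θ)) :
    ∃ σ : Equiv.Perm (Fin k), ∀ i, y i = x (σ i) :=
  solutions_are_diagonal_large_degree_general k θ hθ x y h
end

section
/- For every ε > 0 there exists a constant C > 0 such that for all real X ≥ 2, the number N(X) of 6-tuples of integers (x₁,x₂,x₃,y₁,y₂,y₃) with 1 ≤ x_i, y_i ≤ X for all i satisfying the simultaneous equations x₁x₂x₃ + 2(x₁+x₂+x₃) = y₁y₂y₃ + 2(y₁+y₂+y₃) and x₁x₂ + x₂x₃ + x₃x₁ = y₁y₂ + y₂y₃ + y₃y₁ satisfies |N(X) − 6·⌊X⌋³| ≤ C·X^{2+ε}. -/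
/-!
Write `e₁, e₂, e₃` for the elementary symmetric functions of a triple. Expanding
`∏ (xᵢ + √2)`, the system says `e₂ x = e₂ y` and `e₃ x + 2 e₁ x = e₃ y + 2 e₁ y`.

If `e₁ x = e₁ y`, then all three symmetric functions agree and `y` is a permutation of `x`;
these solutions number `6⌊X⌋³ + O(X²)`.

Otherwise put `a = e₁ x - e₁ y ≠ 0`. Evaluating the cubics `∏ (t - xᵢ)` and `∏ (t - yᵢ)` at
`t = y₀` gives `(x₀ - y₀)(x₁ - y₀)(x₂ - y₀) = a (y₀² - 2)`, which is nonzero because `2` is not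
a square. Such a solution is therefore determined by `(y₀, a)` (`O(X²)` choices), by the two
divisors `x₀ - y₀` and `x₁ - y₀` of `a (y₀² - 2)` (`O(X^ε)` choices each, by the divisor bound),
and by the order of `y₁, y₂`, which are the roots of a known quadratic.
-/

open Finset

lemma add_one_le_div_mul_pow {b : ℝ} (hb : 1 < b) (a : ℕ) :
    (a + 1 : ℝ) ≤ b / (b - 1) * b ^ a := by
  have bernoulli : 1 + a * (b - 1) ≤ b ^ a := by
    simpa using one_add_mul_le_pow (by linarith : (-2 : ℝ) ≤ b - 1) a
  rw [div_mul_eq_mul_div, le_div_iff₀ (by linarith)]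
  nlinarith [mul_le_mul_of_nonneg_left bernoulli (by linarith : (0 : ℝ) ≤ b),
    mul_nonneg (a.cast_nonneg : (0 : ℝ) ≤ a) (sq_nonneg (b - 1))]

lemma add_one_le_pow_of_two_le {x : ℝ} (hx : 2 ≤ x) (a : ℕ) : (a + 1 : ℝ) ≤ x ^ a :=
  calc (a + 1 : ℝ) ≤ 2 ^ a := by exact_mod_cast Nat.lt_two_pow_self
    _ ≤ x ^ a := pow_le_pow_left₀ zero_le_two hx a

/-- The primes below `2 ^ ε⁻¹` each cost a constant factor; for the larger ones `p ^ ε ≥ 2`. -/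
lemma add_one_le_mul_rpow {ε : ℝ} (hε : 0 < ε) {p : ℕ} (hp : 2 ≤ p) (a : ℕ) :
    (a + 1 : ℝ) ≤
      (if p < ⌈(2 : ℝ) ^ ε⁻¹⌉₊ then 2 ^ ε / (2 ^ ε - 1) else 1) * ((p : ℝ) ^ a) ^ ε := by
  have hp' : (2 : ℝ) ≤ p := by exact_mod_cast hp
  rw [← Real.rpow_pow_comm (by positivity)]
  split_ifs with hsmall
  · calc (a + 1 : ℝ) ≤ 2 ^ ε / (2 ^ ε - 1) * ((2 : ℝ) ^ ε) ^ a :=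
          add_one_le_div_mul_pow (Real.one_lt_rpow (by norm_num) hε) a
      _ ≤ 2 ^ ε / (2 ^ ε - 1) * ((p : ℝ) ^ ε) ^ a := by
          have : (1 : ℝ) < 2 ^ ε := Real.one_lt_rpow (by norm_num) hε
          gcongr
  · rw [one_mul]
    refine add_one_le_pow_of_two_le ?_ a
    have hpP : (2 : ℝ) ^ ε⁻¹ ≤ p :=
      (Nat.ceil_le.mp le_rfl).trans (by exact_mod_cast not_lt.mp hsmall)
    calc (2 : ℝ) = ((2 : ℝ) ^ ε⁻¹) ^ ε := by
          rw [← Real.rpow_mul zero_le_two, inv_mul_cancel₀ hε.ne', Real.rpow_one]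
      _ ≤ (p : ℝ) ^ ε := Real.rpow_le_rpow (by positivity) hpP hε.le

theorem Nat.exists_card_divisors_le_rpow {ε : ℝ} (hε : 0 < ε) :
    ∃ C : ℝ, 0 ≤ C ∧ ∀ n : ℕ, (#n.divisors : ℝ) ≤ C * (n : ℝ) ^ ε := by
  set K : ℝ := 2 ^ ε / (2 ^ ε - 1)
  set P : ℕ := ⌈(2 : ℝ) ^ ε⁻¹⌉₊
  have hK : 1 ≤ K := by
    have : (1 : ℝ) < 2 ^ ε := Real.one_lt_rpow (by norm_num) hε
    rw [le_div_iff₀ (by linarith)]; linarith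
  refine ⟨K ^ P, by positivity, fun n => ?_⟩
  rcases eq_or_ne n 0 with rfl | hn
  · simp [Real.zero_rpow hε.ne']
  have hsmall : ∏ p ∈ n.primeFactors, (if p < P then K else 1) ≤ K ^ P := by
    rw [prod_ite, prod_const, prod_const_one, mul_one]
    refine pow_le_pow_right₀ hK ((card_le_card fun p hp => ?_).trans (card_range P).le)
    exact mem_range.mpr (mem_filter.mp hp).2
  calc (#n.divisors : ℝ) = ∏ p ∈ n.primeFactors, ((n.factorization p : ℝ) + 1) := by
        rw [Nat.card_divisors hn]; push_cast; rfl
    _ ≤ ∏ p ∈ n.primeFactors, ((if p < P then K else 1) * ((p : ℝ) ^ n.factorization p) ^ ε) :=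
        prod_le_prod (fun _ _ => by positivity) fun p hp =>
          add_one_le_mul_rpow hε (Nat.prime_of_mem_primeFactors hp).two_le _
    _ = (∏ p ∈ n.primeFactors, (if p < P then K else 1)) * (n : ℝ) ^ ε := by
        rw [prod_mul_distrib, Real.finsetProd_rpow _ _ fun _ _ => by positivity]
        congr 2
        exact_mod_cast (Nat.prod_primeFactors_pow_factorization hn).symm
    _ ≤ K ^ P * (n : ℝ) ^ ε := by gcongr

theorem Int.card_divisors_eq_two_mul (m : ℤ) : #m.divisors = 2 * #m.natAbs.divisors := by
  rw [Int.divisors, card_disjUnion, card_map, card_map, two_mul]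

theorem Int.exists_card_divisors_le_rpow {ε : ℝ} (hε : 0 < ε) :
    ∃ C : ℝ, 0 ≤ C ∧ ∀ m : ℤ, (#m.divisors : ℝ) ≤ C * (m.natAbs : ℝ) ^ ε := by
  obtain ⟨C, hC0, hC⟩ := Nat.exists_card_divisors_le_rpow hε
  refine ⟨2 * C, by positivity, fun m => ?_⟩
  rw [Int.card_divisors_eq_two_mul]
  push_cast
  linarith [hC m.natAbs]

section Symmetric

variable {R : Type*} [CommRing R]

def e₁ (x : Fin 3 → R) : R := x 0 + x 1 + x 2
def e₂ (x : Fin 3 → R) : R := x 0 * x 1 + x 1 * x 2 + x 2 * x 0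
def e₃ (x : Fin 3 → R) : R := x 0 * x 1 * x 2

lemma e₁_comp_perm (x : Fin 3 → R) (σ : Equiv.Perm (Fin 3)) : e₁ (x ∘ σ) = e₁ x := by
  simpa [e₁, Fin.sum_univ_three] using Equiv.sum_comp σ x

lemma e₂_comp_perm (x : Fin 3 → R) (σ : Equiv.Perm (Fin 3)) : e₂ (x ∘ σ) = e₂ x := by
  have h01 : σ 0 ≠ σ 1 := σ.injective.ne (by decide)
  have h02 : σ 0 ≠ σ 2 := σ.injective.ne (by decide)
  have h12 : σ 1 ≠ σ 2 := σ.injective.ne (by decide)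
  simp only [e₂, Function.comp_apply]
  generalize σ 0 = a, σ 1 = b, σ 2 = c at *
  fin_cases a <;> fin_cases b <;> fin_cases c <;> simp_all <;> ring

lemma e₃_comp_perm (x : Fin 3 → R) (σ : Equiv.Perm (Fin 3)) : e₃ (x ∘ σ) = e₃ x := by
  simpa [e₃, Fin.prod_univ_three] using Equiv.prod_comp σ x

lemma eq_and_eq_or_eq_and_eq_of_add_eq_of_mul_eq [IsDomain R] {a b c d : R}
    (hs : a + b = c + d) (hp : a * b = c * d) : (a = c ∧ b = d) ∨ (a = d ∧ b = c) := by
  have : (a - c) * (a - d) = 0 := by linear_combination a * hs - hp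
  rcases mul_eq_zero.mp this with h | h
  · exact .inl ⟨by linear_combination h, by linear_combination hs - h⟩
  · exact .inr ⟨by linear_combination h, by linear_combination hs - h⟩

lemma exists_perm_of_head_eq [IsDomain R] {x y : Fin 3 → R} (h₀ : x 0 = y 0)
    (h₁ : e₁ x = e₁ y) (h₂ : e₂ x = e₂ y) : ∃ σ : Equiv.Perm (Fin 3), y = x ∘ σ := by
  have hs : x 1 + x 2 = y 1 + y 2 := by unfold e₁ at h₁; linear_combination h₁ - h₀
  have hp : x 1 * x 2 = y 1 * y 2 := by
    unfold e₂ at h₂; linear_combination h₂ - x 0 * hs - (y 1 + y 2) * h₀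
  rcases eq_and_eq_or_eq_and_eq_of_add_eq_of_mul_eq hs hp with ⟨h1, h2⟩ | ⟨h1, h2⟩
  · exact ⟨1, by funext i; fin_cases i <;> simp [h₀, h1, h2]⟩
  · refine ⟨Equiv.swap 1 2, funext fun i => ?_⟩
    fin_cases i <;> simp [Equiv.swap_apply_of_ne_of_ne, h₀, h1, h2]

lemma exists_perm_of_e_eq [IsDomain R] {x y : Fin 3 → R} (h₁ : e₁ x = e₁ y) (h₂ : e₂ x = e₂ y)
    (h₃ : e₃ x = e₃ y) : ∃ σ : Equiv.Perm (Fin 3), y = x ∘ σ := by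
  obtain ⟨i, hi⟩ : ∃ i, x i = y 0 := by
    have : (x 0 - y 0) * (x 1 - y 0) * (x 2 - y 0) = 0 := by
      unfold e₁ e₂ e₃ at *
      linear_combination y 0 ^ 2 * h₁ - y 0 * h₂ + h₃
    simp only [mul_eq_zero, sub_eq_zero] at this
    rcases this with (h | h) | h <;> exact ⟨_, h⟩
  obtain ⟨τ, hτ⟩ := exists_perm_of_head_eq (x := x ∘ Equiv.swap 0 i) (by simpa using hi)
    ((e₁_comp_perm x _).trans h₁) ((e₂_comp_perm x _).trans h₂)
  exact ⟨Equiv.swap 0 i * τ, hτ⟩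

def IsSolution (x y : Fin 3 → R) : Prop :=
  e₃ x + 2 * e₁ x = e₃ y + 2 * e₁ y ∧ e₂ x = e₂ y

instance [DecidableEq R] (x y : Fin 3 → R) : Decidable (IsSolution x y) :=
  inferInstanceAs (Decidable (_ ∧ _))

lemma isSolution_comp_perm (x : Fin 3 → R) (σ : Equiv.Perm (Fin 3)) : IsSolution x (x ∘ σ) := by
  rw [IsSolution, e₁_comp_perm, e₂_comp_perm, e₃_comp_perm]
  exact ⟨rfl, rfl⟩

lemma IsSolution.exists_perm [IsDomain R] {x y : Fin 3 → R} (h : IsSolution x y)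
    (h₁ : e₁ x = e₁ y) : ∃ σ : Equiv.Perm (Fin 3), y = x ∘ σ :=
  exists_perm_of_e_eq h₁ h.2 (by linear_combination h.1 - 2 * h₁)

lemma IsSolution.prod_sub_eq {x y : Fin 3 → R} (h : IsSolution x y) :
    (x 0 - y 0) * (x 1 - y 0) * (x 2 - y 0) = (e₁ x - e₁ y) * (y 0 ^ 2 - 2) := by
  obtain ⟨h₃, h₂⟩ := h
  unfold e₁ e₂ e₃ at *
  linear_combination h₃ - y 0 * h₂

end Symmetric

lemma Int.sq_ne_two (z : ℤ) : z ^ 2 ≠ 2 := fun h =>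
  Int.sq_ne_two_mod_four z (by rw [← sq, h]; rfl)

lemma eq_and_eq_of_add_eq_of_mul_eq_of_le_iff {R : Type*} [CommRing R] [LinearOrder R]
    [IsStrictOrderedRing R] {a b c d : R} (hs : a + b = c + d) (hp : a * b = c * d)
    (hle : a ≤ b ↔ c ≤ d) : a = c ∧ b = d := by
  rcases eq_and_eq_or_eq_and_eq_of_add_eq_of_mul_eq hs hp with h | ⟨rfl, rfl⟩
  · exact h
  · have hab : a = b := by
      rcases le_total a b with h | h
      · exact le_antisymm h (hle.mp h)
      · exact le_antisymm (hle.mpr h) h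
    exact ⟨hab, hab.symm⟩

def solutionCode (p : (Fin 3 → ℤ) × (Fin 3 → ℤ)) : (ℤ × ℤ) × (ℤ × ℤ × Bool) :=
  ((p.2 0, e₁ p.1 - e₁ p.2), (p.1 0 - p.2 0, p.1 1 - p.2 0, decide (p.2 1 ≤ p.2 2)))

lemma injOn_solutionCode :
    Set.InjOn solutionCode {p | IsSolution p.1 p.2 ∧ e₁ p.1 ≠ e₁ p.2} := by
  rintro ⟨x, y⟩ ⟨h, hne⟩ ⟨x', y'⟩ ⟨h', -⟩ hcode
  simp only [solutionCode, Prod.mk.injEq, decide_eq_decide] at hcode h h' hne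
  obtain ⟨⟨hy₀, ha⟩, hx₀, hx₁, hord⟩ := hcode
  have hprod := h.prod_sub_eq
  have hprod' := h'.prod_sub_eq
  have hne0 : (x 0 - y 0) * (x 1 - y 0) * (x 2 - y 0) ≠ 0 := by
    rw [hprod]; exact mul_ne_zero (sub_ne_zero.2 hne) (sub_ne_zero.2 (Int.sq_ne_two _))
  have hx₂ : x 2 = x' 2 := by
    have : (x 0 - y 0) * (x 1 - y 0) * (x 2 - y 0) =
        (x 0 - y 0) * (x 1 - y 0) * (x' 2 - y 0) := by
      rw [hprod, hx₀, hx₁, hy₀, ha, hprod']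
    linarith [mul_left_cancel₀ (left_ne_zero_of_mul hne0) this]
  have hx : x = x' := by
    have hx₀' : x 0 = x' 0 := by linarith
    have hx₁' : x 1 = x' 1 := by linarith
    funext i; fin_cases i <;> assumption
  subst hx
  have hs : y 1 + y 2 = y' 1 + y' 2 := by unfold e₁ at ha; linarith
  have hp : y 1 * y 2 = y' 1 * y' 2 := by
    have h₂ := h.2.symm.trans h'.2
    unfold e₂ at h₂
    linear_combination h₂ - y 0 * hs - (y' 1 + y' 2) * hy₀
  obtain ⟨hy₁, hy₂⟩ := eq_and_eq_of_add_eq_of_mul_eq_of_le_iff hs hp hord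
  have hy : y = y' := by funext i; fin_cases i <;> assumption
  rw [hy]

lemma IsSolution.solutionCode_snd_mem {x y : Fin 3 → ℤ} (h : IsSolution x y) (hne : e₁ x ≠ e₁ y) :
    (solutionCode (x, y)).2 ∈ ((e₁ x - e₁ y) * (y 0 ^ 2 - 2)).divisors ×ˢ
      ((e₁ x - e₁ y) * (y 0 ^ 2 - 2)).divisors ×ˢ (univ : Finset Bool) := by
  have hprod := h.prod_sub_eq
  have hne0 : (e₁ x - e₁ y) * (y 0 ^ 2 - 2) ≠ 0 :=
    mul_ne_zero (sub_ne_zero.2 hne) (sub_ne_zero.2 (Int.sq_ne_two _))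
  simp only [solutionCode, mem_product, Int.mem_divisors, mem_univ, and_true]
  exact ⟨⟨⟨(x 1 - y 0) * (x 2 - y 0), by rw [← hprod, mul_assoc]⟩, hne0⟩,
    ⟨(x 0 - y 0) * (x 2 - y 0), by rw [← hprod]; ring⟩, hne0⟩

noncomputable def cube (n : ℕ) : Finset (Fin 3 → ℤ) := Fintype.piFinset fun _ => Icc 1 (n : ℤ)

noncomputable def solutions (n : ℕ) : Finset ((Fin 3 → ℤ) × (Fin 3 → ℤ)) :=
  {p ∈ cube n ×ˢ cube n | IsSolution p.1 p.2}

lemma mem_solutions {n : ℕ} {p : (Fin 3 → ℤ) × (Fin 3 → ℤ)} :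
    p ∈ solutions n ↔
      (∀ i, 1 ≤ p.1 i ∧ p.1 i ≤ n) ∧ (∀ i, 1 ≤ p.2 i ∧ p.2 i ≤ n) ∧ IsSolution p.1 p.2 := by
  simp [solutions, cube, and_assoc]

lemma card_cube (n : ℕ) : #(cube n) = n ^ 3 := by
  simp [cube]

lemma six_mul_descFactorial_le_card_solutions (n : ℕ) : 6 * n.descFactorial 3 ≤ #(solutions n) := by
  have hcard :
      #(univ : Finset ((Fin 3 ↪ Icc 1 (n : ℤ)) × Equiv.Perm (Fin 3))) = 6 * n.descFactorial 3 := by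
    simp [Fintype.card_embedding_eq, Fintype.card_perm, Nat.factorial, mul_comm]
  rw [← hcard]
  refine card_le_card_of_injOn (fun q => (fun i => (q.1 i : ℤ), fun i => (q.1 (q.2 i) : ℤ)))
    (fun q _ => ?_) fun q _ q' _ hqq' => ?_
  · simp only [mem_coe, solutions, cube, mem_filter, mem_product, Fintype.mem_piFinset]
    exact ⟨⟨fun i => (q.1 i).2, fun i => (q.1 (q.2 i)).2⟩,
      isSolution_comp_perm (fun i => (q.1 i : ℤ)) q.2⟩
  · simp only [Prod.mk.injEq, funext_iff, Subtype.coe_inj] at hqq'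
    have he : q.1 = q'.1 := DFunLike.ext _ _ hqq'.1
    refine Prod.ext he (Equiv.ext fun i => q.1.injective ?_)
    rw [hqq'.2, he]

lemma card_filter_e₁_eq_le (n : ℕ) : #{p ∈ solutions n | e₁ p.1 = e₁ p.2} ≤ 6 * n ^ 3 :=
  calc #{p ∈ solutions n | e₁ p.1 = e₁ p.2}
      ≤ #((cube n ×ˢ (univ : Finset (Equiv.Perm (Fin 3)))).image fun q => (q.1, q.1 ∘ q.2)) := by
        refine card_le_card fun p hp => ?_
        simp only [solutions, mem_filter, mem_product] at hp
        obtain ⟨⟨⟨hx, -⟩, hsol⟩, h₁⟩ := hp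
        obtain ⟨σ, hσ⟩ := hsol.exists_perm h₁
        exact mem_image.mpr ⟨(p.1, σ), mem_product.mpr ⟨hx, mem_univ σ⟩, by rw [← hσ]⟩
    _ ≤ #(cube n ×ˢ (univ : Finset (Equiv.Perm (Fin 3)))) := card_image_le
    _ = 6 * n ^ 3 := by simp [card_cube, Fintype.card_perm, Nat.factorial, mul_comm]

lemma solutionCode_fst_mem {n : ℕ} {p : (Fin 3 → ℤ) × (Fin 3 → ℤ)} (hp : p ∈ solutions n) :
    (solutionCode p).1 ∈ Icc 1 (n : ℤ) ×ˢ Icc (-3 * (n : ℤ)) (3 * n) := by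
  obtain ⟨hx, hy, -⟩ := mem_solutions.mp hp
  have := hx 0; have := hx 1; have := hx 2; have := hy 0; have := hy 1; have := hy 2
  simp only [solutionCode, e₁, mem_product, mem_Icc]
  omega

lemma card_filter_e₁_ne_le (n : ℕ) :
    #{p ∈ solutions n | e₁ p.1 ≠ e₁ p.2} ≤
      ∑ q ∈ Icc 1 (n : ℤ) ×ˢ Icc (-3 * (n : ℤ)) (3 * n),
        #(q.2 * (q.1 ^ 2 - 2)).divisors ^ 2 * 2 := by
  rw [card_eq_sum_card_fiberwise fun p hp => solutionCode_fst_mem (mem_filter.mp hp).1]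
  refine sum_le_sum fun q _ => ?_
  set D := (q.2 * (q.1 ^ 2 - 2)).divisors
  calc _ ≤ #(D ×ˢ D ×ˢ (univ : Finset Bool)) := by
        refine card_le_card_of_injOn (fun p => (solutionCode p).2) (fun p hp => ?_)
          fun p hp p' hp' hpp' => ?_
        · rw [mem_coe, mem_filter, mem_filter, mem_solutions] at hp
          obtain ⟨⟨⟨-, -, hsol⟩, hne⟩, rfl⟩ := hp
          exact hsol.solutionCode_snd_mem hne
        · rw [mem_coe, mem_filter, mem_filter, mem_solutions] at hp hp'
          obtain ⟨⟨⟨-, -, hsol⟩, hne⟩, hq⟩ := hp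
          obtain ⟨⟨⟨-, -, hsol'⟩, hne'⟩, hq'⟩ := hp'
          exact injOn_solutionCode ⟨hsol, hne⟩ ⟨hsol', hne'⟩ (Prod.ext (hq.trans hq'.symm) hpp')
    _ = #D ^ 2 * 2 := by simp only [card_product, card_univ, Fintype.card_bool]; ring

lemma natAbs_mul_sq_sub_two_le {n : ℕ} {y a : ℤ} (hy : y ∈ Icc 1 (n : ℤ))
    (ha : a ∈ Icc (-3 * (n : ℤ)) (3 * n)) : ((a * (y ^ 2 - 2)).natAbs : ℝ) ≤ 3 * (n : ℝ) ^ 3 := by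
  rw [mem_Icc] at hy ha
  have ha' : |a| ≤ 3 * n := abs_le.mpr ⟨by linarith, ha.2⟩
  have hy' : |y ^ 2 - 2| ≤ (n : ℤ) ^ 2 := abs_le.mpr ⟨by nlinarith, by nlinarith⟩
  have : |a * (y ^ 2 - 2)| ≤ 3 * (n : ℤ) ^ 3 :=
    calc |a * (y ^ 2 - 2)| = |a| * |y ^ 2 - 2| := abs_mul _ _
      _ ≤ 3 * n * n ^ 2 := mul_le_mul ha' hy' (abs_nonneg _) (by positivity)
      _ = 3 * (n : ℤ) ^ 3 := by ring
  rw [← Int.natCast_natAbs] at this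
  exact_mod_cast this

theorem exists_card_filter_e₁_ne_le {ε : ℝ} (hε : 0 < ε) :
    ∃ C : ℝ, 0 ≤ C ∧ ∀ n : ℕ,
      (#{p ∈ solutions n | e₁ p.1 ≠ e₁ p.2} : ℝ) ≤ C * (n : ℝ) ^ (2 + ε) := by
  obtain ⟨C, hC0, hC⟩ := Int.exists_card_divisors_le_rpow (ε := ε / 6) (by positivity)
  refine ⟨14 * C ^ 2 * 3 ^ (ε / 3), by positivity, fun n => ?_⟩
  set P := Icc 1 (n : ℤ) ×ˢ Icc (-3 * (n : ℤ)) (3 * n)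
  have hP : (#P : ℝ) ≤ 7 * (n : ℝ) ^ 2 := by
    have : #P = n * (6 * n + 1) := by simp [P, Int.card_Icc]; omega
    have hn : (n : ℝ) ≤ n ^ 2 := by exact_mod_cast Nat.le_self_pow two_ne_zero n
    rw [this]; push_cast; linarith
  have hpow : ((3 * (n : ℝ) ^ 3) ^ (ε / 6)) ^ 2 = 3 ^ (ε / 3) * (n : ℝ) ^ ε := by
    rw [← Real.rpow_mul_natCast (by positivity), Real.mul_rpow (by norm_num) (by positivity),
      ← Real.rpow_natCast_mul (by positivity)]
    ring_nf
  have hterm : ∀ q ∈ P, ((#(q.2 * (q.1 ^ 2 - 2)).divisors ^ 2 * 2 : ℕ) : ℝ) ≤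
      2 * C ^ 2 * 3 ^ (ε / 3) * (n : ℝ) ^ ε := by
    intro q hq
    rw [mem_product] at hq
    have hdiv : (#(q.2 * (q.1 ^ 2 - 2)).divisors : ℝ) ≤ C * (3 * (n : ℝ) ^ 3) ^ (ε / 6) :=
      (hC _).trans (by gcongr; exact natAbs_mul_sq_sub_two_le hq.1 hq.2)
    push_cast
    nlinarith [pow_le_pow_left₀ (by positivity) hdiv 2]
  calc (#{p ∈ solutions n | e₁ p.1 ≠ e₁ p.2} : ℝ)
      ≤ ∑ q ∈ P, ((#(q.2 * (q.1 ^ 2 - 2)).divisors ^ 2 * 2 : ℕ) : ℝ) := by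
        exact_mod_cast card_filter_e₁_ne_le n
    _ ≤ #P * (2 * C ^ 2 * 3 ^ (ε / 3) * (n : ℝ) ^ ε) := by
        rw [← nsmul_eq_mul, ← sum_const]; exact sum_le_sum hterm
    _ ≤ 7 * (n : ℝ) ^ 2 * (2 * C ^ 2 * 3 ^ (ε / 3) * (n : ℝ) ^ ε) := by gcongr
    _ = 14 * C ^ 2 * 3 ^ (ε / 3) * (n : ℝ) ^ (2 + ε) := by
        rw [Real.rpow_add' n.cast_nonneg (by positivity), Real.rpow_two]; ring

lemma sub_le_descFactorial_three (n : ℕ) : (n : ℝ) ^ 3 - 3 * n ^ 2 ≤ n.descFactorial 3 := by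
  rcases n with _ | _ | _ | m
  · norm_num
  · norm_num
  · norm_num
  · simp only [Nat.descFactorial_succ, Nat.descFactorial_zero]
    push_cast
    nlinarith [(m.cast_nonneg : (0 : ℝ) ≤ m)]

lemma sq_le_rpow_two_add {ε : ℝ} (hε : 0 < ε) (n : ℕ) : (n : ℝ) ^ 2 ≤ (n : ℝ) ^ (2 + ε) := by
  rcases n.eq_zero_or_pos with rfl | hn
  · simp [Real.zero_rpow (by positivity : (2 : ℝ) + ε ≠ 0)]
  · rw [← Real.rpow_two]
    exact Real.rpow_le_rpow_of_exponent_le (by exact_mod_cast hn) (by linarith)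

theorem exists_abs_card_solutions_sub_le {ε : ℝ} (hε : 0 < ε) :
    ∃ C : ℝ, 0 < C ∧
      ∀ n : ℕ, |(#(solutions n) : ℝ) - 6 * n ^ 3| ≤ C * (n : ℝ) ^ (2 + ε) := by
  obtain ⟨C, hC0, hC⟩ := exists_card_filter_e₁_ne_le hε
  refine ⟨18 + C, by positivity, fun n => ?_⟩
  have hsplit : (#(solutions n) : ℝ) =
      #{p ∈ solutions n | e₁ p.1 = e₁ p.2} + #{p ∈ solutions n | e₁ p.1 ≠ e₁ p.2} := by
    exact_mod_cast (card_filter_add_card_filter_not _).symm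
  have hlow : (6 * n.descFactorial 3 : ℝ) ≤ #(solutions n) := by
    exact_mod_cast six_mul_descFactorial_le_card_solutions n
  have htriv : (#{p ∈ solutions n | e₁ p.1 = e₁ p.2} : ℝ) ≤ 6 * (n : ℝ) ^ 3 := by
    exact_mod_cast card_filter_e₁_eq_le n
  have hpos : 0 ≤ (n : ℝ) ^ (2 + ε) := by positivity
  have hCpos : 0 ≤ C * (n : ℝ) ^ (2 + ε) := by positivity
  rw [abs_sub_le_iff]
  constructor
  · linarith [hC n]
  · linarith [sub_le_descFactorial_three n, sq_le_rpow_two_add hε n]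

lemma ncard_setOf_eq_card_solutions {X : ℝ} (hX : 0 ≤ X) :
    {p : (Fin 3 → ℤ) × (Fin 3 → ℤ) | (∀ i, 1 ≤ p.1 i ∧ (p.1 i : ℝ) ≤ X) ∧
      (∀ i, 1 ≤ p.2 i ∧ (p.2 i : ℝ) ≤ X) ∧ IsSolution p.1 p.2}.ncard = #(solutions ⌊X⌋₊) := by
  rw [← Set.ncard_coe_finset]
  congr 1
  ext p
  simp [mem_solutions, ← Int.le_floor, Int.natCast_floor_eq_floor hX]

/-- The system `x₁x₂x₃ + 2(x₁+x₂+x₃) = y₁y₂y₃ + 2(y₁+y₂+y₃)` and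
`x₁x₂ + x₂x₃ + x₃x₁ = y₁y₂ + y₂y₃ + y₃y₁` (encoding
`(x₁+√2)(x₂+√2)(x₃+√2) = (y₁+√2)(y₂+√2)(y₃+√2)`) has `6⌊X⌋³ + O(X^(2+ε))` solutions in
the box `[1,X]⁶`. -/
theorem sqrt_two_system_count (ε : ℝ) (hε : 0 < ε) :
    ∃ C : ℝ, 0 < C ∧ ∀ X : ℝ, 2 ≤ X →
      |({p : (Fin 3 → ℤ) × (Fin 3 → ℤ) |
          (∀ i, 1 ≤ p.1 i ∧ (p.1 i : ℝ) ≤ X) ∧ (∀ i, 1 ≤ p.2 i ∧ (p.2 i : ℝ) ≤ X) ∧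
          p.1 0 * p.1 1 * p.1 2 + 2 * (p.1 0 + p.1 1 + p.1 2)
            = p.2 0 * p.2 1 * p.2 2 + 2 * (p.2 0 + p.2 1 + p.2 2) ∧
          p.1 0 * p.1 1 + p.1 1 * p.1 2 + p.1 2 * p.1 0
            = p.2 0 * p.2 1 + p.2 1 * p.2 2 + p.2 2 * p.2 0}.ncard : ℝ)
          - 6 * (⌊X⌋ : ℝ) ^ 3|
        ≤ C * X ^ ((2 : ℝ) + ε) := by
  obtain ⟨C, hC, hbound⟩ := exists_abs_card_solutions_sub_le hε
  refine ⟨C, hC, fun X hX => ?_⟩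
  have hX0 : 0 ≤ X := by linarith
  have hcount := ncard_setOf_eq_card_solutions hX0
  simp only [IsSolution, e₁, e₂, e₃] at hcount
  rw [hcount, ← Int.natCast_floor_eq_floor hX0, Int.cast_natCast]
  calc _ ≤ C * (⌊X⌋₊ : ℝ) ^ (2 + ε) := hbound _
    _ ≤ C * X ^ (2 + ε) := by gcongr; exact Nat.floor_le hX0
end

section
/- Let k be a positive integer, let θ ∈ ℂ be algebraic of degree d over ℚ with 2 ≤ d < k, and let m ∈ ℤ[t] be a primitive irreducible polynomial of degree d with m(θ) = 0. Then there exists a constant C > 0 (depending on k and θ) such that the following holds: for every real X ≥ 1 and all integers x₁,…,x_k, y₁,…,y_k with 1 ≤ x_i, y_i ≤ X for all i, satisfying (x₁+θ)⋯(x_k+θ) = (y₁+θ)⋯(y_k+θ) and with x_i ≠ y_j for all pairs of indices i, j, for each index j with 1 ≤ j ≤ k there exists an integer ρ_j with 1 ≤ |ρ_j| ≤ C·X^{k−d} such that ∏_{i=1}^{k}(x_i − y_j) = ρ_j · m(−y_j). -/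
/-!
The integer polynomial `f = ∏ (t + x_i) - ∏ (t + y_i)` has degree `< k` and vanishes at `θ`, so by
Gauss's lemma the primitive irreducible `m` divides it: `f = m g` with `deg g < k - d`. At
`t = -y_j` the second product vanishes, so `∏ (x_i - y_j) = g(-y_j) m(-y_j)`, and `ρ_j = g(-y_j)`
is nonzero because no `x_i` equals `y_j`. The coefficients of `f` satisfy
`|f_i| ≤ 2^(k+1) X^(k-i)`. Solving `m g = f` for the coefficients of `g` from the top down, which
only divides by the leading coefficient of `m`, a nonzero integer, propagates this to
`|g_s| ≪ X^(k-d-s)`, whence `|g(-y_j)| ≪ X^(k-d)`.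
-/

open Polynomial Finset

namespace Polynomial

theorem IsPrimitive.dvd_of_aeval_eq_zero {R K L : Type*} [CommRing R] [IsDomain R]
    [NormalizedGCDMonoid R] [Field K] [Algebra R K] [IsFractionRing R K] [Field L] [Algebra R L]
    [Algebra K L] [IsScalarTower R K L] {p q : R[X]} (hp : p.IsPrimitive) (hirr : Irreducible p)
    {θ : L} (hpθ : aeval θ p = 0) (hqθ : aeval θ q = 0) : p ∣ q := by
  have hθ : IsIntegral K θ :=
    IsAlgebraic.isIntegral ⟨p.map (algebraMap R K),
      (Polynomial.map_ne_zero_iff (IsFractionRing.injective R K)).2 hirr.ne_zero,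
      by rwa [aeval_map_algebraMap]⟩
  refine hp.dvd_of_fraction_map_dvd_fraction_map (K := K) ?_
  have hpmin : p.map (algebraMap R K) ∣ minpoly K θ :=
    (minpoly.irreducible hθ).dvd_symm (hp.irreducible_iff_irreducible_map_fraction_map.1 hirr)
      (minpoly.dvd K θ (by rwa [aeval_map_algebraMap]))
  exact hpmin.trans (minpoly.dvd K θ (by rwa [aeval_map_algebraMap]))

theorem coeff_mul_natDegree_add {R : Type*} [Semiring R] (p q : R[X]) (s : ℕ) :
    (p * q).coeff (p.natDegree + s) =
      ∑ i ∈ range p.natDegree, p.coeff i * q.coeff (p.natDegree + s - i) +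
        p.leadingCoeff * q.coeff s := by
  rw [coeff_mul, Nat.sum_antidiagonal_eq_sum_range_succ_mk, Nat.succ_eq_add_one, add_right_comm,
    sum_range_add, sum_range_succ, sum_eq_zero (s := range s), add_zero, Nat.add_sub_cancel_left]
  · rfl
  · intro i _
    rw [coeff_eq_zero_of_natDegree_lt (by omega), zero_mul]

theorem norm_coeff_le_of_norm_coeff_mul_le {A : Type*} [SeminormedRing A] [NormMulClass A]
    {p q : A[X]} {n : ℕ} {B H : ℝ} (hq : q.natDegree < n) (hlc : 1 ≤ ‖p.leadingCoeff‖)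
    (hH : 1 ≤ H) (hB : 0 ≤ B) (hpq : ∀ j, ‖(p * q).coeff j‖ ≤ B * H ^ (p.natDegree + n - j))
    (s : ℕ) : ‖q.coeff s‖ ≤ B * ((1 + p.natDegree * p.supNorm) * H) ^ (n - s) := by
  set d := p.natDegree
  set K := 1 + d * p.supNorm
  have hsup := p.supNorm_nonneg
  have hK : 1 ≤ K := le_add_of_nonneg_right (by positivity)
  have hKH : 1 ≤ K * H := one_le_mul_of_one_le_of_one_le hK hH
  induction h : n - s using Nat.strong_induction_on generalizing s with
  | _ t ih =>
  rcases le_or_gt n s with hns | hsn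
  · rw [coeff_eq_zero_of_natDegree_lt (by omega), norm_zero]
    positivity
  obtain ⟨t, rfl⟩ : ∃ t', t = t' + 1 := ⟨n - s - 1, by omega⟩
  have hlower : ∀ i ∈ range d,
      ‖p.coeff i * q.coeff (d + s - i)‖ ≤ p.supNorm * (B * (K * H) ^ t) := by
    intro i hi
    have hi : i < d := mem_range.1 hi
    have hqi : ‖q.coeff (d + s - i)‖ ≤ B * (K * H) ^ t :=
      (ih (n - (d + s - i)) (by omega) _ rfl).trans
        (mul_le_mul_of_nonneg_left (pow_le_pow_right₀ hKH (by omega)) hB)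
    rw [norm_mul]
    exact mul_le_mul (p.le_supNorm i) hqi (norm_nonneg _) hsup
  have hHK : H ^ t ≤ (K * H) ^ t :=
    pow_le_pow_left₀ (by positivity) (le_mul_of_one_le_left (by positivity) hK) t
  calc ‖q.coeff s‖ ≤ ‖p.leadingCoeff * q.coeff s‖ := by
        rw [norm_mul]
        exact le_mul_of_one_le_left (norm_nonneg _) hlc
    _ = ‖(p * q).coeff (d + s) - ∑ i ∈ range d, p.coeff i * q.coeff (d + s - i)‖ := by
        rw [coeff_mul_natDegree_add, add_sub_cancel_left]
    _ ≤ ‖(p * q).coeff (d + s)‖ + ∑ i ∈ range d, ‖p.coeff i * q.coeff (d + s - i)‖ :=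
        (norm_sub_le _ _).trans (by gcongr; exact norm_sum_le _ _)
    _ ≤ B * H ^ (t + 1) + d * (p.supNorm * (B * (K * H) ^ t)) := by
        gcongr
        · exact (hpq _).trans_eq (by rw [show d + n - (d + s) = t + 1 by omega])
        · simpa using sum_le_card_nsmul _ _ _ hlower
    _ ≤ B * (K * H) ^ t * H + d * p.supNorm * (B * (K * H) ^ t) * H := by
        rw [pow_succ, ← mul_assoc]
        gcongr ?_ + ?_
        · gcongr B * ?_ * H
        · rw [← mul_assoc]
          exact le_mul_of_one_le_right (by positivity) hH
    _ = B * (K * H) ^ (t + 1) := by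
        simp only [K]
        ring

theorem norm_eval_le_of_norm_coeff_le {A : Type*} [SeminormedRing A] [NormOneClass A]
    {q : A[X]} {n : ℕ} {B K H : ℝ} {z : A} (hq : q.natDegree < n) (hB : 0 ≤ B) (hK : 1 ≤ K)
    (hcoeff : ∀ s, ‖q.coeff s‖ ≤ B * (K * H) ^ (n - s)) (hz : ‖z‖ ≤ H) :
    ‖q.eval z‖ ≤ n * B * K ^ n * H ^ n := by
  have hH : 0 ≤ H := (norm_nonneg z).trans hz
  have hterm : ∀ s ∈ range n, ‖q.coeff s * z ^ s‖ ≤ B * K ^ n * H ^ n := by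
    intro s hs
    have hs : s < n := mem_range.1 hs
    calc ‖q.coeff s * z ^ s‖ ≤ B * (K * H) ^ (n - s) * H ^ s :=
          (norm_mul_le _ _).trans <| mul_le_mul (hcoeff s)
            ((norm_pow_le _ _).trans (pow_le_pow_left₀ (norm_nonneg z) hz s))
            (norm_nonneg _) (by positivity)
      _ = B * K ^ (n - s) * H ^ n := by
          rw [mul_pow, mul_assoc, mul_assoc, ← pow_add, Nat.sub_add_cancel hs.le, mul_assoc]
      _ ≤ B * K ^ n * H ^ n := by
          gcongr
          exact Nat.sub_le n s
  calc ‖q.eval z‖ = ‖∑ s ∈ range n, q.coeff s * z ^ s‖ := by rw [eval_eq_sum_range' hq]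
    _ ≤ ∑ s ∈ range n, ‖q.coeff s * z ^ s‖ := norm_sum_le _ _
    _ ≤ n * (B * K ^ n * H ^ n) := by simpa using sum_le_card_nsmul _ _ _ hterm
    _ = n * B * K ^ n * H ^ n := by ring

theorem isMonicOfDegree_prod_X_add_C {R ι : Type*} [CommSemiring R] [Nontrivial R]
    (s : Finset ι) (a : ι → R) : IsMonicOfDegree (∏ i ∈ s, (X + C (a i))) #s := by
  induction s using Finset.cons_induction with
  | empty => exact isMonicOfDegree_zero_iff.2 prod_empty
  | cons i s hi ih =>
    rw [prod_cons, card_cons, add_comm #s 1]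
    exact (isMonicOfDegree_X_add_one (a i)).mul ih

theorem norm_coeff_prod_X_add_C_le {A ι : Type*} [NormedCommRing A] [NormOneClass A]
    [Fintype ι] {a : ι → A} {H : ℝ} (hH : 0 ≤ H) (ha : ∀ i, ‖a i‖ ≤ H) (j : ℕ) :
    ‖(∏ i, (X + C (a i))).coeff j‖ ≤ 2 ^ Fintype.card ι * H ^ (Fintype.card ι - j) := by
  have : Nontrivial A := NormOneClass.nontrivial
  set k := Fintype.card ι
  rcases le_or_gt j k with hj | hj
  · rw [prod_X_add_C_coeff _ _ (by rwa [card_univ]), card_univ]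
    have hterm : ∀ t ∈ powersetCard (k - j) (univ : Finset ι), ‖∏ i ∈ t, a i‖ ≤ H ^ (k - j) := by
      intro t ht
      calc ‖∏ i ∈ t, a i‖ ≤ ∏ i ∈ t, ‖a i‖ := Finset.norm_prod_le _ _
        _ ≤ ∏ _i ∈ t, H := prod_le_prod (fun _ _ => norm_nonneg _) fun i _ => ha i
        _ = H ^ (k - j) := by rw [prod_const, (mem_powersetCard.1 ht).2]
    calc ‖∑ t ∈ powersetCard (k - j) univ, ∏ i ∈ t, a i‖
        ≤ ∑ t ∈ powersetCard (k - j) univ, ‖∏ i ∈ t, a i‖ := norm_sum_le _ _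
      _ ≤ k.choose (k - j) * H ^ (k - j) := by
          simpa [k] using sum_le_card_nsmul _ _ _ hterm
      _ ≤ 2 ^ k * H ^ (k - j) := by
          gcongr
          exact_mod_cast Nat.choose_le_two_pow _ _
  · rw [coeff_eq_zero_of_natDegree_lt, norm_zero]
    · positivity
    · rwa [(isMonicOfDegree_prod_X_add_C univ a).natDegree_eq, card_univ]

theorem natDegree_add_natDegree_lt_of_prod_X_add_C_sub_eq_mul {R ι : Type*} [CommRing R]
    [Nontrivial R] [Fintype ι] {x y : ι → R} {p q : R[X]}
    (hlc : p.leadingCoeff * q.leadingCoeff ≠ 0)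
    (hpq : ∏ i, (X + C (x i)) - ∏ i, (X + C (y i)) = p * q) :
    p.natDegree + q.natDegree < Fintype.card ι := by
  rw [← natDegree_mul' hlc, ← hpq, ← card_univ]
  refine (isMonicOfDegree_prod_X_add_C _ x).natDegree_sub_lt ?_ (isMonicOfDegree_prod_X_add_C _ y)
  rintro hι
  rw [card_eq_zero] at hι
  apply hlc
  rw [← leadingCoeff_mul' hlc, ← hpq, hι, prod_empty, prod_empty, sub_self, leadingCoeff_zero]

theorem norm_eval_le_of_prod_X_add_C_sub_eq_mul {A ι : Type*} [NormedCommRing A]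
    [NormMulClass A] [NormOneClass A] [Fintype ι] {x y : ι → A} {p q : A[X]} {H : ℝ} {z : A}
    (hH : 1 ≤ H) (hx : ∀ i, ‖x i‖ ≤ H) (hy : ∀ i, ‖y i‖ ≤ H) (hz : ‖z‖ ≤ H)
    (hlc : 1 ≤ ‖p.leadingCoeff‖) (hpq : ∏ i, (X + C (x i)) - ∏ i, (X + C (y i)) = p * q) :
    ‖q.eval z‖ ≤ (Fintype.card ι - p.natDegree : ℕ) * 2 ^ (Fintype.card ι + 1) *
      (1 + p.natDegree * p.supNorm) ^ (Fintype.card ι - p.natDegree) *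
      H ^ (Fintype.card ι - p.natDegree) := by
  have : Nontrivial A := NormOneClass.nontrivial
  have hH0 : 0 ≤ H := zero_le_one.trans hH
  have hsup := p.supNorm_nonneg
  rcases eq_or_ne q 0 with rfl | hq0
  · rw [eval_zero, norm_zero]
    positivity
  set k := Fintype.card ι
  have hdeg : p.natDegree + q.natDegree < k := by
    refine natDegree_add_natDegree_lt_of_prod_X_add_C_sub_eq_mul ?_ hpq
    rw [← norm_ne_zero_iff, norm_mul]
    exact (mul_pos (by linarith) (norm_pos_iff.2 (leadingCoeff_ne_zero.2 hq0))).ne'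
  have hpq_coeff : ∀ j,
      ‖(p * q).coeff j‖ ≤ 2 ^ (k + 1) * H ^ (p.natDegree + (k - p.natDegree) - j) := by
    intro j
    rw [Nat.add_sub_cancel' (by omega), ← hpq, coeff_sub, pow_succ]
    calc _ ≤ _ := norm_sub_le _ _
      _ ≤ 2 ^ k * H ^ (k - j) + 2 ^ k * H ^ (k - j) :=
        add_le_add (norm_coeff_prod_X_add_C_le hH0 hx j) (norm_coeff_prod_X_add_C_le hH0 hy j)
      _ = _ := by ring
  have hq : q.natDegree < k - p.natDegree := by omega
  exact norm_eval_le_of_norm_coeff_le hq (by positivity)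
    (le_add_of_nonneg_right (by positivity))
    (norm_coeff_le_of_norm_coeff_mul_le hq hlc hH (by positivity) hpq_coeff) hz

end Polynomial

theorem key_divisibility_lemma_general (k d : ℕ) (θ : ℂ)
    (m : Polynomial ℤ) (hprim : m.IsPrimitive) (hirr : Irreducible m)
    (hmdeg : m.natDegree = d) (hroot : Polynomial.aeval θ m = 0) :
    ∃ C : ℝ, 0 < C ∧ ∀ X : ℝ, 1 ≤ X → ∀ x y : Fin k → ℤ,
      (∀ i, 1 ≤ x i ∧ (x i : ℝ) ≤ X) → (∀ i, 1 ≤ y i ∧ (y i : ℝ) ≤ X) →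
      (∏ i, ((x i : ℂ) + θ) = ∏ i, ((y i : ℂ) + θ)) →
      (∀ i j, x i ≠ y j) →
      ∀ j : Fin k, ∃ ρ : ℤ, 1 ≤ |ρ| ∧ (|ρ| : ℝ) ≤ C * X ^ (k - d) ∧
        ∏ i, (x i - y j) = ρ * m.eval (-(y j)) := by
  set K : ℝ := 1 + d * m.supNorm
  have hK : 1 ≤ K := le_add_of_nonneg_right (by have := m.supNorm_nonneg; positivity)
  refine ⟨(k + 1) * 2 ^ (k + 1) * K ^ k, by positivity, ?_⟩
  intro X hX x y hx hy hprod hxy j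
  have hnorm : ∀ a : ℤ, 1 ≤ a ∧ (a : ℝ) ≤ X → ‖a‖ ≤ X := fun a ha => by
    simpa [Int.norm_eq_abs, abs_of_pos (show (0 : ℝ) < a by exact_mod_cast ha.1)] using ha.2
  set f : ℤ[X] := ∏ i, (Polynomial.X + C (x i)) - ∏ i, (Polynomial.X + C (y i))
  obtain ⟨g, hfg⟩ : m ∣ f := hprim.dvd_of_aeval_eq_zero (K := ℚ) hirr hroot <| by
    simp only [f, map_sub, map_prod, map_add, aeval_X, eq_intCast, map_intCast, add_comm θ, hprod,
      sub_self]
  have hfy : f.eval (-(y j)) = ∏ i, (x i - y j) := by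
    simp [f, eval_prod, neg_add_eq_sub, prod_eq_zero (mem_univ j)]
  have hρ : g.eval (-(y j)) ≠ 0 := fun h => prod_ne_zero_iff.2 (fun i _ => sub_ne_zero.2 (hxy i j))
    (by rw [← hfy, hfg, eval_mul, h, mul_zero])
  refine ⟨g.eval (-(y j)), Int.one_le_abs hρ, ?_, by rw [← hfy, hfg, eval_mul, mul_comm]⟩
  have hlc : 1 ≤ ‖m.leadingCoeff‖ := by
    rw [Int.norm_eq_abs]
    exact_mod_cast Int.one_le_abs (leadingCoeff_ne_zero.2 hirr.ne_zero)
  have hρ_le := norm_eval_le_of_prod_X_add_C_sub_eq_mul hX (fun i => hnorm _ (hx i))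
    (fun i => hnorm _ (hy i)) (by rw [norm_neg]; exact hnorm _ (hy j)) hlc hfg
  rw [Fintype.card_fin, hmdeg] at hρ_le
  rw [← Int.norm_eq_abs]
  refine hρ_le.trans ?_
  gcongr
  · exact_mod_cast (by omega : k - d ≤ k + 1)
  · exact Nat.sub_le k d

/-- **Lemma 3.1 (Heap–Sahay–Wooley).**
Let `θ` be algebraic of degree `d` over `ℚ` with `2 ≤ d < k`, and let `m ∈ ℤ[t]` be a
primitive irreducible polynomial of degree `d` with `m(θ) = 0`. Then there is a constant
`C > 0` such that: whenever `1 ≤ x_i, y_i ≤ X`, `(x₁+θ)⋯(x_k+θ) = (y₁+θ)⋯(y_k+θ)`, and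
`x_i ≠ y_j` for all `i, j`, then for each `j` there is an integer `ρ_j` with
`1 ≤ |ρ_j| ≤ C·X^(k−d)` and `∏_i (x_i − y_j) = ρ_j · m(−y_j)`. -/
theorem key_divisibility_lemma (k d : ℕ) (θ : ℂ)
    (hθ : IsAlgebraic ℚ θ) (hdeg : (minpoly ℚ θ).natDegree = d)
    (hd2 : 2 ≤ d) (hdk : d < k)
    (m : Polynomial ℤ) (hprim : m.IsPrimitive) (hirr : Irreducible m)
    (hmdeg : m.natDegree = d) (hroot : Polynomial.aeval θ m = 0) :
    ∃ C : ℝ, 0 < C ∧ ∀ X : ℝ, 1 ≤ X → ∀ x y : Fin k → ℤ,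
      (∀ i, 1 ≤ x i ∧ (x i : ℝ) ≤ X) → (∀ i, 1 ≤ y i ∧ (y i : ℝ) ≤ X) →
      (∏ i, ((x i : ℂ) + θ) = ∏ i, ((y i : ℂ) + θ)) →
      (∀ i j, x i ≠ y j) →
      ∀ j : Fin k, ∃ ρ : ℤ, 1 ≤ |ρ| ∧ (|ρ| : ℝ) ≤ C * X ^ (k - d) ∧
        ∏ i, (x i - y j) = ρ * m.eval (-(y j)) :=
  key_divisibility_lemma_general k d θ m hprim hirr hmdeg hroot
end

section
/- Let k > d ≥ 1 be integers and let m ∈ ℤ[t] be a polynomial of degree exactly d (nonzero leading coefficient). Then there exists a constant C > 0 (depending on m and k) such that the following holds: for every real X ≥ 1 and all polynomials F, Ψ ∈ ℤ[t] with F = m·Ψ, deg F ≤ k−1, and |coefficient of t^j in F| ≤ X^{k−j} for all 0 ≤ j ≤ k−1, one has |coefficient of t^r in Ψ| ≤ C·X^{k−d−r} for all 0 ≤ r ≤ k−1−d. -/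
/-- Coefficient bounds for a quotient of integer polynomials: if `m ∈ ℤ[t]` has degree
exactly `d`, `1 ≤ d < k`, then there is `C > 0` such that whenever `F = m·Ψ` with
`deg F ≤ k−1` and `|F_j| ≤ X^(k−j)` for `0 ≤ j ≤ k−1` (where `X ≥ 1`), one has
`|Ψ_r| ≤ C·X^(k−d−r)` for `0 ≤ r ≤ k−1−d`. -/
theorem coeff_bound_of_factor (k d : ℕ) (hd : 1 ≤ d) (hdk : d < k)
    (m : Polynomial ℤ) (hm : m.natDegree = d) (hm0 : m ≠ 0) :
    ∃ C : ℝ, 0 < C ∧ ∀ X : ℝ, 1 ≤ X → ∀ F Ψ : Polynomial ℤ,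
      F = m * Ψ → F.natDegree ≤ k - 1 →
      (∀ j : ℕ, j ≤ k - 1 → (|F.coeff j| : ℝ) ≤ X ^ (k - j)) →
      ∀ r : ℕ, r ≤ k - 1 - d → (|Ψ.coeff r| : ℝ) ≤ C * X ^ (k - d - r) := by
  classical
  set M : ℝ := ∑ i ∈ Finset.range d, (|m.coeff i| : ℝ) with hM
  have hM0 : 0 ≤ M := Finset.sum_nonneg fun i _ => by positivity
  have hlead : (1 : ℝ) ≤ |(m.coeff d : ℝ)| := by
    have h0 : m.coeff d ≠ 0 := by
      rw [← hm]
      exact Polynomial.leadingCoeff_ne_zero.mpr hm0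
    have := Int.one_le_abs h0
    exact_mod_cast this
  refine ⟨(1 + M) ^ k, by positivity, ?_⟩
  intro X hX F Ψ hF hdeg hFb
  have hX0 : (0:ℝ) < X := lt_of_lt_of_le one_pos hX
  -- Ψ has small degree (or is zero)
  have hΨdeg : ∀ r : ℕ, k - 1 - d < r → Ψ.coeff r = 0 := by
    intro r hr
    by_cases hΨ0 : Ψ = 0
    · simp [hΨ0]
    · have hFd : F.natDegree = d + Ψ.natDegree := by
        rw [hF, Polynomial.natDegree_mul hm0 hΨ0, hm]
      apply Polynomial.coeff_eq_zero_of_natDegree_lt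
      omega
  have key : ∀ n : ℕ, ∀ r : ℕ, k - 1 - d < n + r →
      (|Ψ.coeff r| : ℝ) ≤ (1 + M) ^ n * X ^ (k - d - r) := by
    intro n
    induction n with
    | zero =>
      intro r hr
      rw [hΨdeg r (by omega)]
      simp only [Int.cast_zero, abs_zero]
      positivity
    | succ n ih =>
      intro r hr
      by_cases hre : k - 1 - d < r
      · rw [hΨdeg r hre]
        simp only [Int.cast_zero, abs_zero]
        positivity
      push_neg at hre
      -- convolution identity
      have hconv : F.coeff (r + d) =
          ∑ i ∈ Finset.range (r + d + 1), m.coeff i * Ψ.coeff (r + d - i) := by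
        rw [hF, Polynomial.coeff_mul, Finset.Nat.sum_antidiagonal_eq_sum_range_succ_mk]
      have hsub : ∑ i ∈ Finset.range (d + 1), m.coeff i * Ψ.coeff (r + d - i)
          = ∑ i ∈ Finset.range (r + d + 1), m.coeff i * Ψ.coeff (r + d - i) := by
        apply Finset.sum_subset
        · exact Finset.range_subset_range.mpr (by omega)
        · intro i _ hi
          have : m.coeff i = 0 := by
            apply Polynomial.coeff_eq_zero_of_natDegree_lt
            rw [hm]
            simpa using Nat.lt_of_succ_le (Nat.le_of_not_lt (by simpa [Finset.mem_range] using hi))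
          simp [this]
      have hid : m.coeff d * Ψ.coeff r =
          F.coeff (r + d) - ∑ i ∈ Finset.range d, m.coeff i * Ψ.coeff (r + d - i) := by
        rw [hconv, ← hsub, Finset.sum_range_succ, Nat.add_sub_cancel]
        ring
      -- cast to ℝ and take absolute values
      have hidR : (m.coeff d : ℝ) * (Ψ.coeff r : ℝ) =
          (F.coeff (r + d) : ℝ) - ∑ i ∈ Finset.range d, (m.coeff i : ℝ) * (Ψ.coeff (r + d - i) : ℝ) := by
        exact_mod_cast congrArg (fun z : ℤ => (z : ℝ)) hid
      have h1 : (|Ψ.coeff r| : ℝ) ≤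
          |(F.coeff (r + d) : ℝ)| +
            ∑ i ∈ Finset.range d, |(m.coeff i : ℝ)| * |(Ψ.coeff (r + d - i) : ℝ)| := by
        calc (|Ψ.coeff r| : ℝ) ≤ |(m.coeff d : ℝ)| * |(Ψ.coeff r : ℝ)| :=
              le_mul_of_one_le_left (abs_nonneg _) hlead
          _ = |(m.coeff d : ℝ) * (Ψ.coeff r : ℝ)| := (abs_mul _ _).symm
          _ = |(F.coeff (r + d) : ℝ) - ∑ i ∈ Finset.range d,
                (m.coeff i : ℝ) * (Ψ.coeff (r + d - i) : ℝ)| := by rw [hidR]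
          _ ≤ |(F.coeff (r + d) : ℝ)| + |∑ i ∈ Finset.range d,
                (m.coeff i : ℝ) * (Ψ.coeff (r + d - i) : ℝ)| := abs_sub _ _
          _ ≤ _ := by
              gcongr
              calc |∑ i ∈ Finset.range d, (m.coeff i : ℝ) * (Ψ.coeff (r + d - i) : ℝ)|
                  ≤ ∑ i ∈ Finset.range d, |(m.coeff i : ℝ) * (Ψ.coeff (r + d - i) : ℝ)| :=
                    Finset.abs_sum_le_sum_abs _ _
                _ = ∑ i ∈ Finset.range d, |(m.coeff i : ℝ)| * |(Ψ.coeff (r + d - i) : ℝ)| := by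
                    simp [abs_mul]
      -- bound each piece
      have hFbound : |(F.coeff (r + d) : ℝ)| ≤ X ^ (k - d - r) := by
        have := hFb (r + d) (by omega)
        have he : k - (r + d) = k - d - r := by omega
        rwa [he] at this
      have hterm : ∀ i ∈ Finset.range d,
          |(m.coeff i : ℝ)| * |(Ψ.coeff (r + d - i) : ℝ)| ≤
            |(m.coeff i : ℝ)| * ((1 + M) ^ n * X ^ (k - d - r)) := by
        intro i hi
        rw [Finset.mem_range] at hi
        have hih := ih (r + d - i) (by omega)
        have hmono : X ^ (k - d - (r + d - i)) ≤ X ^ (k - d - r) :=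
          pow_le_pow_right₀ hX (by omega)
        have : (|Ψ.coeff (r + d - i)| : ℝ) ≤ (1 + M) ^ n * X ^ (k - d - r) := by
          calc (|Ψ.coeff (r + d - i)| : ℝ) ≤ (1 + M) ^ n * X ^ (k - d - (r + d - i)) := hih
            _ ≤ (1 + M) ^ n * X ^ (k - d - r) := by
                apply mul_le_mul_of_nonneg_left hmono (by positivity)
        exact mul_le_mul_of_nonneg_left this (abs_nonneg _)
      have hsumb : ∑ i ∈ Finset.range d, |(m.coeff i : ℝ)| * |(Ψ.coeff (r + d - i) : ℝ)|
          ≤ M * ((1 + M) ^ n * X ^ (k - d - r)) := by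
        calc ∑ i ∈ Finset.range d, |(m.coeff i : ℝ)| * |(Ψ.coeff (r + d - i) : ℝ)|
            ≤ ∑ i ∈ Finset.range d, |(m.coeff i : ℝ)| * ((1 + M) ^ n * X ^ (k - d - r)) :=
              Finset.sum_le_sum hterm
          _ = M * ((1 + M) ^ n * X ^ (k - d - r)) := by rw [hM, ← Finset.sum_mul]
      have hpow1 : (1:ℝ) ≤ (1 + M) ^ n := one_le_pow₀ (by linarith)
      have hXpow : (0:ℝ) < X ^ (k - d - r) := by positivity
      calc (|Ψ.coeff r| : ℝ) ≤ X ^ (k - d - r) + M * ((1 + M) ^ n * X ^ (k - d - r)) := by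
            refine h1.trans ?_
            exact add_le_add hFbound hsumb
        _ ≤ (1 + M) ^ (n + 1) * X ^ (k - d - r) := by
            rw [pow_succ]
            nlinarith [mul_nonneg hM0 (le_of_lt hXpow)]
  intro r hr
  have hk := key k r (by omega)
  exact hk
end
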